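/- arXiv:2404.19757 — 2 statements merged into one kernel-verified Lean document; each statement's English description precedes it below -/
import Mathlib

section
/- If V(s), W(s) : [0,1] → U(N) are continuous paths of unitary matrices with ‖[V(s),W(s)]‖ < 2 for all s ∈ [0,1], then Bott(V(s),W(s)) = Bott(V(0),W(0)) for all s ∈ [0,1] (homotopy invariance of the Bott index). -/
/-! The commutator `U = V W V† W†` of two unitaries has determinant one, so `exp (Tr log U) = 1`
and the Bott index is an integer. Since `[V, W] = (U - 1) W V`, the bound `‖[V, W]‖ < 2` says
`‖U - 1‖ < 2`, which keeps the spectrum of the unitary `U` off `-1`, where the principal logarithm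
is continuous. The roots of the characteristic polynomial depend continuously on the matrix (by a
compactness argument on enumerations of the roots), so `s ↦ Bott(V s, W s)` is continuous on
`[0, 1]`; being integer-valued, it is constant. -/

open scoped Matrix

/-- Spectral (operator) norm of a square complex matrix, induced by the Euclidean norm. -/
noncomputable def sNorm {N : ℕ} (A : Matrix (Fin N) (Fin N) ℂ) : ℝ :=
  ‖Matrix.toEuclideanCLM (𝕜 := ℂ) A‖

/-- Trace of the principal logarithm, as the sum of principal logs of the eigenvalues. -/
noncomputable def trLog {N : ℕ} (W : Matrix (Fin N) (Fin N) ℂ) : ℂ :=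
  ((W.charpoly.roots).map Complex.log).sum

/-- The Bott index `Bott(U,V) = (1/(2πi)) Tr log (U V U† V†)`. -/
noncomputable def bott {N : ℕ} (U V : Matrix (Fin N) (Fin N) ℂ) : ℂ :=
  (2 * Real.pi * Complex.I)⁻¹ * trLog (U * V * Uᴴ * Vᴴ)

open Polynomial Filter Topology

theorem Multiset.exists_eq_map_univ_val {α : Type*} {m : Multiset α} {N : ℕ}
    (h : Multiset.card m = N) : ∃ r : Fin N → α, m = Finset.univ.val.map r := by
  subst h
  refine ⟨fun i => m.toList.get (i.cast (Multiset.length_toList m).symm), ?_⟩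
  rw [Fin.univ_val_map]
  conv_lhs => rw [← Multiset.coe_toList m]
  congr 1
  exact List.ext_get (by simp) fun _ _ _ => by simp

theorem Polynomial.roots_fintype_prod_X_sub_C {R ι : Type*} [CommRing R] [IsDomain R]
    [Fintype ι] (v : ι → R) : (∏ i, (X - C (v i))).roots = Finset.univ.val.map v := by
  rw [Finset.prod_eq_multiset_prod, ← roots_multiset_prod_X_sub_C (Finset.univ.val.map v),
    Multiset.map_map]
  rfl

theorem Polynomial.eq_prod_X_sub_C_of_tendsto {K ι α : Type*} [Field K] [Infinite K]
    [TopologicalSpace K] [IsTopologicalRing K] [T2Space K] [Fintype ι] {l : Filter α} [l.NeBot]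
    {p : α → K[X]} {q : K[X]} {r : α → ι → K} {v : ι → K}
    (hp : ∀ k, p k = ∏ i, (X - C (r k i)))
    (hq : ∀ z, Tendsto (fun k => (p k).eval z) l (𝓝 (q.eval z)))
    (hr : Tendsto r l (𝓝 v)) :
    q = ∏ i, (X - C (v i)) := by
  refine Polynomial.funext fun z => tendsto_nhds_unique (hq z) ?_
  simp only [hp, eval_prod, eval_sub, eval_X, eval_C]
  exact tendsto_finsetProd _ fun i _ => tendsto_const_nhds.sub (tendsto_pi_nhds.1 hr i)

namespace Matrix

section Roots

variable {n : Type*} [Fintype n] [DecidableEq n]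

theorem card_roots_charpoly {K : Type*} [Field K] [IsAlgClosed K] (A : Matrix n n K) :
    Multiset.card A.charpoly.roots = Fintype.card n := by
  rw [← (IsAlgClosed.splits A.charpoly).natDegree_eq_card_roots, charpoly_natDegree_eq_dim]

theorem charpoly_eq_prod_of_roots_eq {K ι : Type*} [Field K] [IsAlgClosed K] [Fintype ι]
    {A : Matrix n n K} {r : ι → K} (h : A.charpoly.roots = Finset.univ.val.map r) :
    A.charpoly = ∏ i, (X - C (r i)) := by
  rw [(IsAlgClosed.splits A.charpoly).eq_prod_roots_of_monic A.charpoly_monic, h,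
    Multiset.map_map]
  rfl

theorem eventually_norm_roots_charpoly_le {α : Type*} {l : Filter α} {B : α → Matrix n n ℂ}
    {A : Matrix n n ℂ} (hB : Tendsto B l (𝓝 A)) :
    ∃ R, ∀ᶠ k in l, ∀ μ ∈ (B k).charpoly.roots, ‖μ‖ ≤ R := by
  open scoped Matrix.Norms.L2Operator in
  obtain ⟨R, hR⟩ := hB.norm.isBoundedUnder_le
  refine ⟨R * ‖(1 : Matrix n n ℂ)‖, ?_⟩
  filter_upwards [hR] with k hk μ hμ
  have hspec : μ ∈ spectrum ℂ (B k) := mem_spectrum_iff_isRoot_charpoly.2 (isRoot_of_mem_roots hμ)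
  calc ‖μ‖ ≤ ‖B k‖ * ‖(1 : Matrix n n ℂ)‖ := by
        simpa using spectrum.subset_closedBall_norm_mul (B k) hspec
    _ ≤ R * ‖(1 : Matrix n n ℂ)‖ := by gcongr; exact hk

theorem continuousAt_sum_map_roots_charpoly {f : ℂ → ℂ} {A : Matrix n n ℂ}
    (hf : ∀ μ ∈ A.charpoly.roots, ContinuousAt f μ) :
    ContinuousAt (fun B : Matrix n n ℂ => (B.charpoly.roots.map f).sum) A := by
  open scoped Matrix.Norms.L2Operator in
  rw [ContinuousAt, tendsto_nhds_iff_seq_tendsto]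
  intro B hB
  refine tendsto_of_subseq_tendsto fun ns hns => ?_
  have hBns : Tendsto (B ∘ ns) atTop (𝓝 A) := hB.comp hns
  choose r hr using fun k => Multiset.exists_eq_map_univ_val (card_roots_charpoly (B (ns k)))
  obtain ⟨R, hR⟩ := eventually_norm_roots_charpoly_le hBns
  have hr_bdd : ∀ᶠ k in atTop, r k ∈ Metric.closedBall 0 (max R 0) := by
    filter_upwards [hR] with k hk
    rw [mem_closedBall_zero_iff, pi_norm_le_iff_of_nonneg (le_max_right _ _)]
    exact fun i => (hk _ (hr k ▸ Multiset.mem_map_of_mem _ (Finset.mem_univ_val i))).trans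
      (le_max_left _ _)
  obtain ⟨v, -, φ, hφ, hrv⟩ :=
    tendsto_subseq_of_frequently_bounded Metric.isBounded_closedBall hr_bdd.frequently
  have hcharpoly : ∀ z, Tendsto (fun k => (B (ns (φ k))).charpoly.eval z) atTop
      (𝓝 (A.charpoly.eval z)) := by
    intro z
    simp only [eval_charpoly]
    exact ((continuous_const.sub continuous_id).matrix_det.tendsto A).comp
      (hBns.comp hφ.tendsto_atTop)
  have hroots : A.charpoly.roots = Finset.univ.val.map v := by
    rw [eq_prod_X_sub_C_of_tendsto (fun k => charpoly_eq_prod_of_roots_eq (hr (φ k)))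
      hcharpoly hrv, roots_fintype_prod_X_sub_C]
  refine ⟨φ, ?_⟩
  simp only [Function.comp_apply, hr, hroots, Multiset.map_map, Finset.sum_map_val]
  exact tendsto_finsetSum _ fun i _ => (hf (v i) (hroots ▸ Multiset.mem_map_of_mem _
    (Finset.mem_univ_val i))).tendsto.comp (tendsto_pi_nhds.1 hrv i)

end Roots

end Matrix

theorem norm_commutator_eq_norm_sub_one {E : Type*} [NormedRing E] [StarRing E] [CStarRing E]
    {u v : E} (hu : u ∈ unitary E) (hv : v ∈ unitary E) :
    ‖u * v - v * u‖ = ‖u * v * star u * star v - 1‖ := by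
  have h : u * v - v * u = (u * v * star u * star v - 1) * (v * u) := by
    rw [sub_mul, one_mul,
      show u * v * star u * star v * (v * u) = u * v * (star u * (star v * v) * u) by
        simp only [mul_assoc],
      Unitary.star_mul_self_of_mem hv, mul_one, Unitary.star_mul_self_of_mem hu, mul_one]
  rw [h, CStarRing.norm_mul_mem_unitary _ (mul_mem hv hu)]

theorem Unitary.spectrum_commutator_subset_slitPlane {A : Type*} [CStarAlgebra A] {u v : A}
    (hu : u ∈ unitary A) (hv : v ∈ unitary A) (h : ‖u * v - v * u‖ < 2) :
    spectrum ℂ (u * v * star u * star v) ⊆ Complex.slitPlane :=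
  (spectrum_subset_slitPlane_iff_norm_lt_two
    (mul_mem (mul_mem (mul_mem hu hv) (star_mem hu)) (star_mem hv))).2
    (norm_commutator_eq_norm_sub_one hu hv ▸ h)

namespace Matrix

variable {n : Type*} [Fintype n] [DecidableEq n]

theorem roots_charpoly_commutator_subset_slitPlane {V W : Matrix n n ℂ}
    (hV : V ∈ unitaryGroup n ℂ) (hW : W ∈ unitaryGroup n ℂ)
    (h : ‖toEuclideanCLM (𝕜 := ℂ) (V * W - W * V)‖ < 2) :
    ∀ μ ∈ (V * W * Vᴴ * Wᴴ).charpoly.roots, μ ∈ Complex.slitPlane := by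
  open scoped Matrix.Norms.L2Operator in
  exact fun μ hμ => Unitary.spectrum_commutator_subset_slitPlane hV hW h
    (mem_spectrum_iff_isRoot_charpoly.2 (isRoot_of_mem_roots hμ))

theorem det_commutator_of_mem_unitaryGroup {R : Type*} [CommRing R] [StarRing R]
    {V W : Matrix n n R} (hV : V ∈ unitaryGroup n R) (hW : W ∈ unitaryGroup n R) :
    (V * W * Vᴴ * Wᴴ).det = 1 := by
  calc (V * W * Vᴴ * Wᴴ).det = (V * star V).det * (W * star W).det := by
        simp only [det_mul, star_eq_conjTranspose]; ring
    _ = 1 := by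
      rw [Unitary.mul_star_self_of_mem hV, Unitary.mul_star_self_of_mem hW, det_one, mul_one]

end Matrix

theorem Complex.exp_sum_map_log {m : Multiset ℂ} (h : ∀ z ∈ m, z ≠ 0) :
    exp (m.map log).sum = m.prod := by
  rw [exp_multiset_sum, Multiset.map_map]
  conv_rhs => rw [← Multiset.map_id m]
  exact congrArg _ (Multiset.map_congr rfl fun z hz => exp_log (h z hz))

theorem Complex.isDiscrete_range_intCast : IsDiscrete (Set.range ((↑) : ℤ → ℂ)) := by
  simpa [Function.comp_def] using (isometry_ofReal.isEmbedding.comp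
    Int.isClosedEmbedding_coe_real.isEmbedding).isInducing.isDiscrete_range

theorem exp_trLog {N : ℕ} {A : Matrix (Fin N) (Fin N) ℂ} (h : ∀ μ ∈ A.charpoly.roots, μ ≠ 0) :
    Complex.exp (trLog A) = A.det := by
  rw [trLog, Complex.exp_sum_map_log h, Matrix.det_eq_prod_roots_charpoly]

theorem exists_bott_eq_intCast {N : ℕ} {V W : Matrix (Fin N) (Fin N) ℂ}
    (hV : V ∈ Matrix.unitaryGroup (Fin N) ℂ) (hW : W ∈ Matrix.unitaryGroup (Fin N) ℂ)
    (h : ∀ μ ∈ (V * W * Vᴴ * Wᴴ).charpoly.roots, μ ≠ 0) : ∃ n : ℤ, bott V W = n := by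
  obtain ⟨n, hn⟩ := Complex.exp_eq_one_iff.1 <|
    (exp_trLog h).trans (Matrix.det_commutator_of_mem_unitaryGroup hV hW)
  refine ⟨n, ?_⟩
  rw [bott, hn]
  field_simp [Complex.I_ne_zero, Real.pi_ne_zero]

/-- Homotopy invariance of the Bott index: along continuous paths of unitaries with
`‖[V(s),W(s)]‖ < 2` for all `s ∈ [0,1]`, the Bott index is constant. -/
theorem stmt_4 {N : ℕ} (V W : ℝ → Matrix (Fin N) (Fin N) ℂ)
    (hVcont : ContinuousOn V (Set.Icc 0 1)) (hWcont : ContinuousOn W (Set.Icc 0 1))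
    (hVu : ∀ s ∈ Set.Icc (0:ℝ) 1, V s ∈ Matrix.unitaryGroup (Fin N) ℂ)
    (hWu : ∀ s ∈ Set.Icc (0:ℝ) 1, W s ∈ Matrix.unitaryGroup (Fin N) ℂ)
    (hcomm : ∀ s ∈ Set.Icc (0:ℝ) 1, sNorm (V s * W s - W s * V s) < 2) :
    ∀ s ∈ Set.Icc (0:ℝ) 1, bott (V s) (W s) = bott (V 0) (W 0) := by
  have hslit : ∀ s ∈ Set.Icc (0:ℝ) 1,
      ∀ μ ∈ (V s * W s * (V s)ᴴ * (W s)ᴴ).charpoly.roots, μ ∈ Complex.slitPlane := fun s hs =>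
    Matrix.roots_charpoly_commutator_subset_slitPlane (hVu s hs) (hWu s hs) (hcomm s hs)
  have hU : ContinuousOn (fun s => V s * W s * (V s)ᴴ * (W s)ᴴ) (Set.Icc 0 1) :=
    ((hVcont.mul hWcont).mul hVcont.star).mul hWcont.star
  have hcont : ContinuousOn (fun s => bott (V s) (W s)) (Set.Icc 0 1) := fun s hs =>
    have hlog : ContinuousAt trLog (V s * W s * (V s)ᴴ * (W s)ᴴ) :=
      Matrix.continuousAt_sum_map_roots_charpoly fun μ hμ => continuousAt_clog (hslit s hs μ hμ)
    continuousWithinAt_const.mul <|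
      hlog.comp_continuousWithinAt (f := fun t => V t * W t * (V t)ᴴ * (W t)ᴴ) (hU s hs)
  have hint : Set.MapsTo (fun s => bott (V s) (W s)) (Set.Icc 0 1) (Set.range ((↑) : ℤ → ℂ)) :=
    fun s hs => (exists_bott_eq_intCast (hVu s hs) (hWu s hs) fun μ hμ =>
      Complex.slitPlane_ne_zero (hslit s hs μ hμ)).imp fun _ hn => hn.symm
  exact fun s hs => isPreconnected_Icc.constant_of_mapsTo Complex.isDiscrete_range_intCast
    hcont hint hs (Set.left_mem_Icc.2 zero_le_one)
end

section
/- Let A and B be Hermitian matrices. If Bott(e^{iA}, e^{iB}) ≠ 0 (and the Bott index is well-defined, i.e. ‖[e^{iA}, e^{iB}]‖ < 2), then there exists s₀ ∈ [0,1] such that ‖[e^{iAs₀}, e^{iB}]‖ = 2. -/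
open scoped Matrix

/-!
Suppose, to the contrary, that `‖[U_s, V]‖ < 2` for all `s ∈ [0,1]`, where `U_s = e^{iAs}` and
`V = e^{iB}`. The group commutator `W_s = U_s V U_s⋆ V⋆` is unitary with `‖W_s - 1‖ < 2`, so its
spectrum avoids the ray `(-∞, 0]`; moreover `det W_s = 1` and `W_0 = 1`. Hence
`F(t, s) = det ((1 - t) + t W_s) = ∏_μ (1 - t + t μ)` has no zero on the unit square and equals `1`
on the sides `t = 0`, `t = 1` and `s = 0`. Lifting `F` through `exp` over the square shows that the
continuous logarithm `t ↦ ∑_μ log (1 - t + t μ)` of `F(·, 1)`, which starts at `0`, also ends at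
`0`. Its end value is `Tr log W_1 = 2πi Bott(e^{iA}, e^{iB})`.
-/

open Complex Set

section Lifting

variable {X : Type*} [TopologicalSpace X]

theorem Complex.eqOn_of_exp_eq {S : Set X} (hS : IsPreconnected S) {f g : X → ℂ}
    (hf : ContinuousOn f S) (hg : ContinuousOn g S) (hfg : ∀ x ∈ S, exp (f x) = exp (g x))
    {x₀ : X} (hx₀ : x₀ ∈ S) (h : f x₀ = g x₀) : EqOn f g S := by
  intro x hx
  have hdisc : IsDiscrete (AddSubgroup.zmultiples (2 * Real.pi * I) : Set ℂ) :=
    isDiscrete_iff_discreteTopology.mpr (NormedSpace.discreteTopology_zmultiples _)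
  have hmaps : MapsTo (f - g) S (AddSubgroup.zmultiples (2 * Real.pi * I)) := by
    intro y hy
    obtain ⟨n, hn⟩ := exp_eq_exp_iff_exists_int.mp (hfg y hy)
    exact ⟨n, by simp [hn]⟩
  have := hS.constant_of_mapsTo hdisc (hf.sub hg) hmaps hx hx₀
  simpa [h, sub_eq_zero] using this

theorem Complex.exists_continuous_exp_eq [SimplyConnectedSpace X] [LocallyPathConnectedSpace X]
    {f : X → ℂ} (hf : Continuous f) (hf0 : ∀ x, f x ≠ 0) (x₀ : X) {z₀ : ℂ}
    (hz₀ : exp z₀ = f x₀) : ∃ g : X → ℂ, Continuous g ∧ g x₀ = z₀ ∧ ∀ x, exp (g x) = f x := by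
  obtain ⟨g, ⟨hg₀, hg⟩, -⟩ :=
    isCoveringMapOn_exp.existsUnique_continuousMap_lifts ⟨f, hf⟩ (a₀ := x₀) hz₀ hf0
  exact ⟨g, g.continuous, hg₀, congrFun hg⟩

theorem Complex.eq_zero_of_exp_eq_on_top_edge {F : ℝ × ℝ → ℂ}
    (hF : ContinuousOn F (Icc 0 1 ×ˢ Icc 0 1)) (hF0 : ∀ p ∈ Icc (0 : ℝ) 1 ×ˢ Icc 0 1, F p ≠ 0)
    (hleft : ∀ s ∈ Icc (0 : ℝ) 1, F (0, s) = 1) (hright : ∀ s ∈ Icc (0 : ℝ) 1, F (1, s) = 1)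
    (hbot : ∀ t ∈ Icc (0 : ℝ) 1, F (t, 0) = 1) {g : ℝ → ℂ} (hg : ContinuousOn g (Icc 0 1))
    (hgF : ∀ t ∈ Icc (0 : ℝ) 1, exp (g t) = F (t, 1)) (hg0 : g 0 = 0) : g 1 = 0 := by
  have h0 : (0 : ℝ) ∈ Icc 0 1 := left_mem_Icc.2 zero_le_one
  have h1 : (1 : ℝ) ∈ Icc 0 1 := right_mem_Icc.2 zero_le_one
  -- The lifting theorem wants a simply connected, locally path-connected domain, so `F` is first
  -- extended from the square to the plane by clamping.
  set clamp : ℝ × ℝ → ℝ × ℝ := fun p =>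
    (projIcc 0 1 zero_le_one p.1, projIcc 0 1 zero_le_one p.2)
  have hclamp_mem (p : ℝ × ℝ) : clamp p ∈ Icc (0 : ℝ) 1 ×ˢ Icc 0 1 :=
    ⟨(projIcc 0 1 zero_le_one p.1).2, (projIcc 0 1 zero_le_one p.2).2⟩
  have hclamp {p : ℝ × ℝ} (hp : p ∈ Icc (0 : ℝ) 1 ×ˢ Icc 0 1) : clamp p = p := by
    simp [clamp, projIcc_of_mem _ hp.1, projIcc_of_mem _ hp.2]
  obtain ⟨Φ, hΦ, hΦ0, hΦF⟩ := exists_continuous_exp_eq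
    (hF.comp_continuous (by fun_prop) hclamp_mem) (fun p => hF0 _ (hclamp_mem p)) (0, 0)
    (z₀ := 0) (by simp [hclamp (mk_mem_prod h0 h0), hleft])
  have hΦF' {p : ℝ × ℝ} (hp : p ∈ Icc (0 : ℝ) 1 ×ˢ Icc 0 1) : exp (Φ p) = F p := by
    simpa [hclamp hp] using hΦF p
  have edge {f₁ f₂ : ℝ → ℂ} (h₁ : Continuous f₁) (h₂ : ContinuousOn f₂ (Icc 0 1))
      (h₁₂ : ∀ x ∈ Icc (0 : ℝ) 1, exp (f₁ x) = exp (f₂ x)) (h₀ : f₁ 0 = f₂ 0) : f₁ 1 = f₂ 1 :=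
    eqOn_of_exp_eq isPreconnected_Icc h₁.continuousOn h₂ h₁₂ h0 h₀ h1
  have h01 : Φ (0, 1) = 0 := edge (f₁ := fun s => Φ (0, s)) (f₂ := 0) (by fun_prop)
    continuousOn_const (fun s hs => by simp [hΦF' (mk_mem_prod h0 hs), hleft s hs]) hΦ0
  have h10 : Φ (1, 0) = 0 := edge (f₁ := fun t => Φ (t, 0)) (f₂ := 0) (by fun_prop)
    continuousOn_const (fun t ht => by simp [hΦF' (mk_mem_prod ht h0), hbot t ht]) hΦ0
  have h11 : Φ (1, 1) = 0 := edge (f₁ := fun s => Φ (1, s)) (f₂ := 0) (by fun_prop)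
    continuousOn_const (fun s hs => by simp [hΦF' (mk_mem_prod h1 hs), hright s hs]) h10
  have htop : Φ (1, 1) = g 1 := edge (f₁ := fun t => Φ (t, 1)) (by fun_prop) hg
    (fun t ht => by rw [hΦF' (mk_mem_prod ht h1), hgF t ht]) (h01.trans hg0.symm)
  rw [← htop, h11]

end Lifting

section CStarAlgebra

variable {A : Type*} [CStarAlgebra A] {u v w : A}

theorem norm_le_one_of_mem_unitary (hu : u ∈ unitary A) : ‖u‖ ≤ 1 := by
  nontriviality A
  exact (CStarRing.norm_coe_unitary ⟨u, hu⟩).le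

theorem norm_commutator_le_two (hu : u ∈ unitary A) (hv : v ∈ unitary A) :
    ‖u * v - v * u‖ ≤ 2 :=
  calc ‖u * v - v * u‖ ≤ ‖u * v‖ + ‖v * u‖ := norm_sub_le _ _
    _ ≤ 1 + 1 := add_le_add (norm_le_one_of_mem_unitary (mul_mem hu hv))
        (norm_le_one_of_mem_unitary (mul_mem hv hu))
    _ = 2 := one_add_one_eq_two

theorem norm_mul_mul_star_mul_star_sub_one (hu : u ∈ unitary A) (hv : v ∈ unitary A) :
    ‖u * v * star u * star v - 1‖ = ‖u * v - v * u‖ := by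
  have hw : star u * star v ∈ unitary A := mul_mem (Unitary.star_mem hu) (Unitary.star_mem hv)
  have : u * v * star u * star v - 1 = (u * v - v * u) * (star u * star v) := by
    rw [sub_mul, mul_assoc (u * v), mul_assoc v, ← mul_assoc u, Unitary.mul_star_self_of_mem hu,
      one_mul, Unitary.mul_star_self_of_mem hv]
  rw [this, CStarRing.norm_mul_coe_unitary _ ⟨_, hw⟩]

theorem spectrum_subset_slitPlane_of_norm_sub_one_lt (hw : w ∈ unitary A) (h : ‖w - 1‖ < 2) :
    spectrum ℂ w ⊆ slitPlane := by
  nontriviality A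
  intro μ hμ
  have hμ1 : ‖μ‖ = 1 := by simpa using spectrum.subset_circle_of_unitary hw hμ
  have hμ2 : ‖μ - 1‖ < 2 := by
    have : μ - 1 ∈ spectrum ℂ (w - algebraMap ℂ A 1) := by
      rw [← spectrum.sub_singleton_eq]
      exact ⟨μ, hμ, 1, rfl, rfl⟩
    exact (spectrum.norm_le_norm_of_mem this).trans_lt (by simpa using h)
  have h1 : μ.re * μ.re + μ.im * μ.im = 1 := by
    rw [← normSq_apply, ← Complex.sq_norm, hμ1, one_pow]
  have h2 : (μ.re - 1) * (μ.re - 1) + μ.im * μ.im < 4 := by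
    have := (sq_lt_sq₀ (norm_nonneg _) zero_le_two).2 hμ2
    rw [Complex.sq_norm, normSq_apply, sub_re, sub_im, one_re, one_im, sub_zero] at this
    linarith
  rw [mem_slitPlane_iff]
  by_contra! hc
  nlinarith [hc.2]

theorem spectrum_mul_mul_star_mul_star_subset_slitPlane (hu : u ∈ unitary A)
    (hv : v ∈ unitary A) (h : ‖u * v - v * u‖ < 2) :
    spectrum ℂ (u * v * star u * star v) ⊆ slitPlane :=
  spectrum_subset_slitPlane_of_norm_sub_one_lt
    (mul_mem (mul_mem (mul_mem hu hv) (Unitary.star_mem hu)) (Unitary.star_mem hv))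
    ((norm_mul_mul_star_mul_star_sub_one hu hv).trans_lt h)

theorem exp_I_mul_smul_mem_unitary {a : A} (ha : IsSelfAdjoint a) (s : ℝ) :
    NormedSpace.exp ((I * s) • a) ∈ unitary A := by
  rw [mul_smul]
  exact (selfAdjoint.expUnitary
    ⟨(s : ℂ) • a, (show IsSelfAdjoint (s : ℂ) from conj_ofReal s).smul ha⟩).prop

theorem continuous_exp_I_mul_smul (a : A) :
    Continuous fun s : ℝ => NormedSpace.exp ((I * s) • a) := by
  let +nondep : NormedAlgebra ℚ A := .restrictScalars ℚ ℂ A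
  fun_prop

end CStarAlgebra

namespace Matrix

variable {n : Type*} [Fintype n] [DecidableEq n]

theorem det_smul_one_add_smul (a b : ℂ) (M : Matrix n n ℂ) :
    (a • (1 : Matrix n n ℂ) + b • M).det = (M.charpoly.roots.map fun μ => a + b * μ).prod := by
  have hsplit : M.charpoly.Splits := IsAlgClosed.splits _
  have hcard : M.charpoly.roots.card = Fintype.card n := by
    rw [← hsplit.natDegree_eq_card_roots, charpoly_natDegree_eq_dim]
  rcases eq_or_ne b 0 with rfl | hb
  · simp [hcard]
  have hscalar : a • (1 : Matrix n n ℂ) + b • M = (-b) • (scalar n (-a / b) - M) := by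
    rw [smul_sub, scalar_apply, ← smul_one_eq_diagonal, smul_smul, neg_smul, sub_neg_eq_add]
    field_simp
  rw [hscalar, det_smul, ← eval_charpoly, hsplit.eval_eq_prod_roots_of_monic (charpoly_monic M),
    ← hcard, ← Multiset.prod_replicate, ← Multiset.map_const', ← Multiset.prod_map_mul]
  refine congrArg _ (Multiset.map_congr rfl fun μ _ => ?_)
  field_simp
  ring

theorem det_mul_mul_star_mul_star {R : Type*} [CommRing R] [StarRing R] {U V : Matrix n n R}
    (hU : U ∈ unitary (Matrix n n R)) (hV : V ∈ unitary (Matrix n n R)) :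
    (U * V * star U * star V).det = 1 := by
  rw [det_mul, det_mul, det_mul, mul_right_comm U.det, ← det_mul, Unitary.mul_star_self_of_mem hU,
    mul_assoc, ← det_mul, Unitary.mul_star_self_of_mem hV, det_one, one_mul]

end Matrix

theorem trLog_eq_zero_of_path {N : ℕ} {W : ℝ → Matrix (Fin N) (Fin N) ℂ} (hW : Continuous W)
    (hW0 : W 0 = 1) (hdet : ∀ s ∈ Icc (0 : ℝ) 1, (W s).det = 1)
    (hspec : ∀ s ∈ Icc (0 : ℝ) 1, spectrum ℂ (W s) ⊆ slitPlane) : trLog (W 1) = 0 := by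
  have h1 : (1 : ℝ) ∈ Icc 0 1 := right_mem_Icc.2 zero_le_one
  have hseg {s t : ℝ} (hs : s ∈ Icc (0 : ℝ) 1) (ht : t ∈ Icc (0 : ℝ) 1) {μ : ℂ}
      (hμ : μ ∈ (W s).charpoly.roots) : 1 - (t : ℂ) + t * μ ∈ slitPlane := by
    have := starConvex_one_slitPlane
      (hspec s hs (Matrix.mem_spectrum_of_isRoot_charpoly (Polynomial.isRoot_of_mem_roots hμ)))
      (sub_nonneg.2 ht.2) ht.1 (sub_add_cancel 1 t)
    simpa [Complex.real_smul] using this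
  set F : ℝ × ℝ → ℂ := fun p => ((1 - (p.1 : ℂ)) • (1 : Matrix _ _ ℂ) + (p.1 : ℂ) • W p.2).det
  have hF (t s : ℝ) : F (t, s) = ((W s).charpoly.roots.map fun μ => 1 - (t : ℂ) + t * μ).prod :=
    Matrix.det_smul_one_add_smul _ _ _
  set l : ℝ → ℂ := fun t => ((W 1).charpoly.roots.map fun μ => log (1 - (t : ℂ) + t * μ)).sum
  have hl : l 1 = trLog (W 1) := by simp [l, trLog]
  rw [← hl]
  refine eq_zero_of_exp_eq_on_top_edge (F := F) (by fun_prop : Continuous F).continuousOn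
    ?_ ?_ ?_ ?_ ?_ ?_ (by simp [l])
  · rintro ⟨t, s⟩ ⟨ht, hs⟩
    rw [hF]
    refine Multiset.prod_ne_zero fun h0 => ?_
    obtain ⟨μ, hμ, hμ0⟩ := Multiset.mem_map.1 h0
    exact slitPlane_ne_zero (hseg hs ht hμ) hμ0
  · intro s _
    simp [F]
  · intro s hs
    simp [F, hdet s hs]
  · intro t _
    simp only [F, hW0, ← add_smul, sub_add_cancel, one_smul, Matrix.det_one]
  · exact continuousOn_multiset_sum _ fun μ hμ =>
      ContinuousOn.clog (by fun_prop) fun t ht => hseg h1 ht hμ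
  · intro t ht
    rw [hF, Complex.exp_multiset_sum, Multiset.map_map]
    exact congrArg _ (Multiset.map_congr rfl fun μ hμ => exp_log (slitPlane_ne_zero (hseg h1 ht hμ)))

theorem stmt_5_general {N : ℕ} (A B : Matrix (Fin N) (Fin N) ℂ)
    (hA : A.IsHermitian) (hB : B.IsHermitian)
    (hnz : bott (NormedSpace.exp (Complex.I • A)) (NormedSpace.exp (Complex.I • B)) ≠ 0) :
    ∃ s₀ ∈ Set.Icc (0:ℝ) 1,
      sNorm (NormedSpace.exp ((Complex.I * s₀) • A) * NormedSpace.exp (Complex.I • B)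
        - NormedSpace.exp (Complex.I • B) * NormedSpace.exp ((Complex.I * s₀) • A)) = 2 := by
  open scoped Matrix.Norms.L2Operator in
  by_contra! hne
  set U : ℝ → Matrix (Fin N) (Fin N) ℂ := fun s => NormedSpace.exp ((I * s) • A)
  set V := NormedSpace.exp (I • B)
  have hU (s : ℝ) : U s ∈ unitary _ := exp_I_mul_smul_mem_unitary hA s
  have hV : V ∈ unitary _ := by simpa using exp_I_mul_smul_mem_unitary hB 1
  have hUc : Continuous U := continuous_exp_I_mul_smul A
  have hspec (s : ℝ) (hs : s ∈ Icc (0 : ℝ) 1) :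
      spectrum ℂ (U s * V * star (U s) * star V) ⊆ slitPlane :=
    spectrum_mul_mul_star_mul_star_subset_slitPlane (hU s) hV
      ((norm_commutator_le_two (hU s) hV).lt_of_ne (hne s hs))
  have htr := trLog_eq_zero_of_path (W := fun s => U s * V * star (U s) * star V) (by fun_prop)
    (by simp [U, hV]) (fun s _ => Matrix.det_mul_mul_star_mul_star (hU s) hV) hspec
  apply hnz
  simpa [bott, U, V, Matrix.star_eq_conjTranspose] using htr

/-- If `A`, `B` are Hermitian, the Bott index of `e^{iA}` and `e^{iB}` is well defined
(`‖[e^{iA},e^{iB}]‖ < 2`) and nonzero, then there is `s₀ ∈ [0,1]` with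
`‖[e^{iAs₀}, e^{iB}]‖ = 2`. -/
theorem stmt_5 {N : ℕ} (A B : Matrix (Fin N) (Fin N) ℂ)
    (hA : A.IsHermitian) (hB : B.IsHermitian)
    (hwd : sNorm (NormedSpace.exp (Complex.I • A) * NormedSpace.exp (Complex.I • B)
      - NormedSpace.exp (Complex.I • B) * NormedSpace.exp (Complex.I • A)) < 2)
    (hnz : bott (NormedSpace.exp (Complex.I • A)) (NormedSpace.exp (Complex.I • B)) ≠ 0) :
    ∃ s₀ ∈ Set.Icc (0:ℝ) 1,
      sNorm (NormedSpace.exp ((Complex.I * s₀) • A) * NormedSpace.exp (Complex.I • B)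
        - NormedSpace.exp (Complex.I • B) * NormedSpace.exp ((Complex.I * s₀) • A)) = 2 :=
  stmt_5_general A B hA hB hnz
end
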